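/- (Excess reject-risk decomposition.) Fix x ∈ ℝ^d and λ ∈ (0,1). Let η̂_c(x), c ∈ C, be any estimators of η_c(x) constructed from the random sample D, let ĝ(x) ∈ argmax_c η̂_c(x), and let α̂(x) ∈ {0,1} be any sample-dependent abstention indicator (α̂(x)=1 means reject). Let R̂_λ(x) = (1 − η_{ĝ(x)}(x))·1{α̂(x)=0} + λ·1{α̂(x)=1}, R*_λ(x) = min{R*(x), λ}, and α*(x) = 1{R*(x) > λ}. Then E_D[ R̂_λ(x) − R*_λ(x) ] ≤ 2·E_D[ max_{c∈C} |η_c(x) − η̂_c(x)| · 1{α̂(x)=0} ] + |λ − R*(x)| · P_D( α̂(x) ≠ α*(x) ). -/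

import Mathlib

/-!
Where the sample accepts, the plug-in label `ĝ` maximizes `η̂`, so its true class probability
falls short of the best one by at most twice the sup-error `max_c |η_c − η̂_c|`; this accounts
for the `2·E[sup-error·1{accept}]` term. Beyond that, the plug-in reject-risk exceeds
`min{R*, λ}` only when the sample takes the other decision than `α*`, and then by
`|λ − R*|`. Integrating this pointwise bound gives the decomposition.
-/

open MeasureTheory Finset

section PlugIn

variable {ι : Type*} [Fintype ι] [Nonempty ι]

lemma le_add_two_mul_sup'_abs_sub_of_forall_le (η η' : ι → ℝ) {i : ι}
    (hi : ∀ j, η' j ≤ η' i) (j : ι) :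
    η j ≤ η i + 2 * univ.sup' univ_nonempty (fun k => |η k - η' k|) := by
  have hsup : ∀ k, |η k - η' k| ≤ univ.sup' univ_nonempty (fun k => |η k - η' k|) :=
    fun k => le_sup' (fun k => |η k - η' k|) (mem_univ k)
  have hi' := abs_le.mp (hsup i)
  have hj' := abs_le.mp (hsup j)
  linarith [hi j]

lemma one_sub_le_inf'_add_two_mul_sup'_abs_sub_of_forall_le (η η' : ι → ℝ) {i : ι}
    (hi : ∀ j, η' j ≤ η' i) :
    1 - η i ≤ univ.inf' univ_nonempty (fun j => 1 - η j)
      + 2 * univ.sup' univ_nonempty (fun k => |η k - η' k|) := by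
  rw [← sub_le_iff_le_add]
  refine le_inf' _ _ fun j _ => ?_
  linarith [le_add_two_mul_sup'_abs_sub_of_forall_le η η' hi j]

end PlugIn

section RejectRisk

variable {Ω : Type*}

noncomputable def rejectRisk (accept : Set Ω) (risk : Ω → ℝ) (lam : ℝ) (ω : Ω) : ℝ :=
  accept.indicator risk ω + lam * acceptᶜ.indicator (fun _ => (1 : ℝ)) ω

lemma rejectRisk_nonneg {accept : Set Ω} {risk : Ω → ℝ} {lam : ℝ} (hrisk : ∀ ω, 0 ≤ risk ω)
    (hlam : 0 ≤ lam) (ω : Ω) : 0 ≤ rejectRisk accept risk lam ω :=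
  add_nonneg (Set.indicator_nonneg (fun ω _ => hrisk ω) ω)
    (mul_nonneg hlam (Set.indicator_nonneg (fun _ _ => zero_le_one) ω))

lemma rejectRisk_le (accept : Set Ω) {risk M : Ω → ℝ} {R lam : ℝ} {ω : Ω}
    (hrisk : risk ω ≤ R + 2 * M ω) :
    rejectRisk accept risk lam ω
      ≤ 2 * accept.indicator M ω
        + |lam - R| * {ω | ¬ (ω ∈ accept ↔ R ≤ lam)}.indicator (fun _ => (1 : ℝ)) ω
        + min R lam := by
  simp only [rejectRisk, Set.indicator, Set.mem_compl_iff, Set.mem_ofPred_eq]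
  split_ifs <;> grind [abs_of_nonneg, abs_of_neg]

variable [MeasurableSpace Ω]

theorem integral_rejectRisk_sub_min_le (P : Measure Ω) [IsProbabilityMeasure P]
    {accept : Set Ω} (haccept : MeasurableSet accept) {risk M : Ω → ℝ} {R lam : ℝ}
    (hlam : 0 ≤ lam) (hrisk_nonneg : ∀ ω, 0 ≤ risk ω) (hrisk : ∀ ω, risk ω ≤ R + 2 * M ω)
    (hM : Integrable M P) :
    (∫ ω, rejectRisk accept risk lam ω ∂P) - min R lam
      ≤ 2 * (∫ ω, accept.indicator M ω ∂P)
        + |lam - R| * (P {ω | ¬ (ω ∈ accept ↔ R ≤ lam)}).toReal := by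
  set disagree := {ω | ¬ (ω ∈ accept ↔ R ≤ lam)}
  have hdisagree : MeasurableSet disagree := (haccept.iff (MeasurableSet.const _)).compl
  have hM' : Integrable (fun ω => 2 * accept.indicator M ω) P :=
    (hM.indicator haccept).const_mul 2
  have hdisagree' : Integrable
      (fun ω => |lam - R| * disagree.indicator (fun _ => (1 : ℝ)) ω) P :=
    ((integrable_const (1 : ℝ)).indicator hdisagree).const_mul _
  have hsum : Integrable (fun ω => 2 * accept.indicator M ω
      + |lam - R| * disagree.indicator (fun _ => (1 : ℝ)) ω) P := hM'.add hdisagree'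
  have hmono : ∫ ω, rejectRisk accept risk lam ω ∂P ≤ ∫ ω, 2 * accept.indicator M ω
      + |lam - R| * disagree.indicator (fun _ => (1 : ℝ)) ω + min R lam ∂P :=
    integral_mono_of_nonneg
      (Filter.Eventually.of_forall (rejectRisk_nonneg hrisk_nonneg hlam))
      (hsum.add (integrable_const (min R lam)))
      (Filter.Eventually.of_forall fun ω => rejectRisk_le accept (hrisk ω))
  rw [integral_add hsum (integrable_const _), integral_add hM' hdisagree',
    integral_const_mul, integral_const_mul, integral_indicator_const (1 : ℝ) hdisagree,
    integral_const] at hmono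
  simp only [smul_eq_mul, mul_one, measureReal_def, measure_univ, ENNReal.toReal_one,
    one_mul] at hmono
  linarith

end RejectRisk

theorem excess_reject_risk_decomposition_general
    {C : Type*} [Fintype C] [Nonempty C]
    {Ω : Type*} [MeasurableSpace Ω] (P : Measure Ω) [IsProbabilityMeasure P]
    (lam : ℝ) (hlam : lam ∈ Set.Ioo (0 : ℝ) 1)
    (η : C → ℝ)
    (hη_nonneg : ∀ c, 0 ≤ η c) (hη_sum : ∑ c, η c = 1)  -- conditional probabilities at x
    (Rstar : ℝ)
    (hRstar : Rstar = Finset.univ.inf' Finset.univ_nonempty (fun c => 1 - η c))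
    (ηhat : C → Ω → ℝ)
    (ghat : Ω → C)
    (hghat : ∀ ω c, ηhat c ω ≤ ηhat (ghat ω) ω)          -- `ĝ(x) ∈ argmax_c η̂_c(x)`
    (accept : Set Ω) (haccept : MeasurableSet accept)    -- the event `{α̂(x) = 0}`
    (hint : Integrable (fun ω =>
      Finset.univ.sup' Finset.univ_nonempty (fun c => |η c - ηhat c ω|)) P) :
    (∫ ω, (accept.indicator (fun ω => 1 - η (ghat ω)) ω
        + lam * acceptᶜ.indicator (fun _ => (1 : ℝ)) ω) ∂P) - min Rstar lam
      ≤ 2 * (∫ ω, accept.indicator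
            (fun ω => Finset.univ.sup' Finset.univ_nonempty (fun c => |η c - ηhat c ω|)) ω ∂P)
        + |lam - Rstar| * (P {ω | ¬ (ω ∈ accept ↔ Rstar ≤ lam)}).toReal := by
  have hη_le_one : ∀ c, η c ≤ 1 := fun c =>
    hη_sum ▸ single_le_sum (fun c _ => hη_nonneg c) (mem_univ c)
  refine integral_rejectRisk_sub_min_le P haccept hlam.1.le
    (fun ω => sub_nonneg.mpr (hη_le_one (ghat ω))) (fun ω => ?_) hint
  rw [hRstar]
  exact one_sub_le_inf'_add_two_mul_sup'_abs_sub_of_forall_le η (fun c => ηhat c ω) (hghat ω)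

/-- Excess reject-risk decomposition. Fix a point `x`; `η c` denotes the conditional class
probability `η_c(x)`, with pointwise Bayes risk `R*(x) = min_c (1 − η_c(x))`. The sample
space `Ω` carries the law `P` of the sample `D`; `ηhat c ω` is any sample-dependent
estimator `η̂_c(x)`, `ghat ω ∈ argmax_c η̂_c(x)` is the plug-in classifier, and the
measurable set `accept ⊆ Ω` is the event `{α̂(x) = 0}` of any sample-dependent abstention
indicator (`α̂(x) = 1` means reject). With reject cost `λ ∈ (0,1)`, the reject-risk is
`R̂_λ(x) = (1 − η_{ĝ(x)}(x))·1{α̂(x)=0} + λ·1{α̂(x)=1}`, the optimal value is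
`R*_λ(x) = min{R*(x), λ}`, and `α*(x) = 1{R*(x) > λ}`. Then
`E_D[R̂_λ(x) − R*_λ(x)] ≤ 2·E_D[max_c |η_c(x) − η̂_c(x)|·1{α̂(x)=0}]
  + |λ − R*(x)|·P_D(α̂(x) ≠ α*(x))`. -/
theorem excess_reject_risk_decomposition
    {C : Type*} [Fintype C] [Nonempty C] [MeasurableSpace C] [MeasurableSingletonClass C]
    {Ω : Type*} [MeasurableSpace Ω] (P : Measure Ω) [IsProbabilityMeasure P]
    (lam : ℝ) (hlam : lam ∈ Set.Ioo (0 : ℝ) 1)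
    (η : C → ℝ)
    (hη_nonneg : ∀ c, 0 ≤ η c) (hη_sum : ∑ c, η c = 1)  -- conditional probabilities at x
    (Rstar : ℝ)
    (hRstar : Rstar = Finset.univ.inf' Finset.univ_nonempty (fun c => 1 - η c))
    (ηhat : C → Ω → ℝ) (hηhat_meas : ∀ c, Measurable (ηhat c))
    (ghat : Ω → C) (hghat_meas : Measurable ghat)
    (hghat : ∀ ω c, ηhat c ω ≤ ηhat (ghat ω) ω)          -- `ĝ(x) ∈ argmax_c η̂_c(x)`
    (accept : Set Ω) (haccept : MeasurableSet accept)    -- the event `{α̂(x) = 0}`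
    (hint : Integrable (fun ω =>
      Finset.univ.sup' Finset.univ_nonempty (fun c => |η c - ηhat c ω|)) P) :
    (∫ ω, (accept.indicator (fun ω => 1 - η (ghat ω)) ω
        + lam * acceptᶜ.indicator (fun _ => (1 : ℝ)) ω) ∂P) - min Rstar lam
      ≤ 2 * (∫ ω, accept.indicator
            (fun ω => Finset.univ.sup' Finset.univ_nonempty (fun c => |η c - ηhat c ω|)) ω ∂P)
        + |lam - Rstar| * (P {ω | ¬ (ω ∈ accept ↔ Rstar ≤ lam)}).toReal :=
  excess_reject_risk_decomposition_general P lam hlam η hη_nonneg hη_sum Rstar hRstar ηhat ghat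
    hghat accept haccept hint
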